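/- Let d ≥ 2, let P be a d×d symmetric positive definite matrix with eigenvalues σ_1 ≥ ⋯ ≥ σ_d > 0 and orthonormal eigenvectors u_1,…,u_d, let g be a nonzero vector in span{u_1, u_2}, g̃ = g/√(gᵀPg), and P' = (d²/(d²−1))(P − (2/(d+1)) P g̃ g̃ᵀ P). Let σ^{new}_1 ≥ ⋯ ≥ σ^{new}_d be the ordered eigenvalues of P', and define the ratios D = σ_2/σ_d and D' = σ^{new}_2/σ^{new}_d. Then D' ≤ ((d+1)/(d−1)) · D, and moreover if D > (d+1)/(d−1) then D' ≤ D. -/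

import Mathlib

/-!
In the eigenbasis of `P` the quadratic form of `P'` is `c (xᵀPx - β (g̃ᵀPx)²)` with
`c = d²/(d²-1)` and `β = 2/(d+1)`. As `g̃` lies in `span {u₁, u₂}` and `g̃ᵀPg̃ ≤ 1`, Cauchy–Schwarz
bounds the cut term by `β (σ₁x₁² + σ₂x₂²)`: besides the factor `c`, the update removes at most a
fraction `β` of the first two eigencomponents, so `1 - β = (d-1)/(d+1)` is the worst shrinking.
Hence `σ'_d ≥ c (1 - β) σ_d`, and even `σ'_d ≥ c σ_d` once `σ_d ≤ (1 - β) σ₂`. On the other side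
`P' ≤ c P`, and min-max on the intersection of `span {u'₁, u'₂}` with `u₁^⊥` gives `σ'₂ ≤ c σ₂`.
-/

open Matrix Finset

section SpectralSum

variable {ι n R : Type*} [Fintype ι] [CommSemiring R]

def spectralSum (σ : ι → R) (u : ι → n → R) : Matrix n n R :=
  ∑ i, σ i • vecMulVec (u i) (u i)

variable (σ : ι → R) (u : ι → n → R)

theorem transpose_spectralSum : (spectralSum σ u)ᵀ = spectralSum σ u := by
  simp [spectralSum, transpose_sum, transpose_smul, transpose_vecMulVec]

variable [Fintype n]

theorem dotProduct_spectralSum_mulVec (x y : n → R) :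
    x ⬝ᵥ (spectralSum σ u *ᵥ y) = ∑ i, σ i * (u i ⬝ᵥ x) * (u i ⬝ᵥ y) := by
  simp only [spectralSum, sum_mulVec, dotProduct_sum, smul_mulVec, vecMulVec_mulVec,
    dotProduct_smul]
  refine sum_congr rfl fun i _ => ?_
  simp [dotProduct_comm x (u i), smul_eq_mul]
  ring

theorem dotProduct_spectralSum_mulVec_self (x : n → R) :
    x ⬝ᵥ (spectralSum σ u *ᵥ x) = ∑ i, σ i * (u i ⬝ᵥ x) ^ 2 := by
  simp only [dotProduct_spectralSum_mulVec, sq, mul_assoc]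

theorem dotProduct_spectralSum_mulVec_of_orthonormal [DecidableEq ι]
    (horth : ∀ i j, u i ⬝ᵥ u j = if i = j then (1 : R) else 0) (j : ι) :
    u j ⬝ᵥ (spectralSum σ u *ᵥ u j) = σ j := by
  simp [dotProduct_spectralSum_mulVec, horth]

end SpectralSum

section Orthonormal

variable {ι n : Type*} [Fintype ι] [Fintype n] [DecidableEq ι] {σ : ι → ℝ} {u : ι → n → ℝ}
  (horth : ∀ i j, u i ⬝ᵥ u j = if i = j then (1 : ℝ) else 0)
include horth

theorem le_of_forall_mul_le_dotProduct_spectralSum_mulVec {m : ℝ}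
    (hm : ∀ x, m * (x ⬝ᵥ x) ≤ x ⬝ᵥ (spectralSum σ u *ᵥ x)) (j : ι) : m ≤ σ j := by
  simpa [horth, dotProduct_spectralSum_mulVec_of_orthonormal σ u horth] using hm (u j)

-- Min-max: the plane spanned by `u i` and `u j` meets the hyperplane `w ⬝ᵥ x = 0`.
theorem le_of_forall_dotProduct_eq_zero {i j : ι} (hij : i ≠ j) (hσ : σ j ≤ σ i) (w : n → ℝ)
    {M : ℝ} (hM : ∀ x, w ⬝ᵥ x = 0 → x ⬝ᵥ (spectralSum σ u *ᵥ x) ≤ M * (x ⬝ᵥ x)) :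
    σ j ≤ M := by
  obtain ⟨α, γ, hw, hαγ⟩ : ∃ α γ : ℝ, α * (w ⬝ᵥ u i) + γ * (w ⬝ᵥ u j) = 0 ∧ 0 < α ^ 2 + γ ^ 2 := by
    by_cases h : w ⬝ᵥ u i = 0 ∧ w ⬝ᵥ u j = 0
    · exact ⟨1, 0, by simp [h.1, h.2], by norm_num⟩
    · refine ⟨w ⬝ᵥ u j, -(w ⬝ᵥ u i), by ring, ?_⟩
      rcases not_and_or.mp h with h | h
      · nlinarith [sq_pos_of_ne_zero h, sq_nonneg (w ⬝ᵥ u j)]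
      · nlinarith [sq_pos_of_ne_zero h, sq_nonneg (w ⬝ᵥ u i)]
  set x := α • u i + γ • u j
  have hcoord : ∀ k, u k ⬝ᵥ x = (if k = i then α else 0) + (if k = j then γ else 0) := by
    intro k
    simp [x, dotProduct_add, dotProduct_smul, horth, mul_ite, eq_comm]
  have hnorm : x ⬝ᵥ x = α ^ 2 + γ ^ 2 := by
    simp [x, dotProduct_add, add_dotProduct, horth, hij, hij.symm]
    ring
  have hquad : x ⬝ᵥ (spectralSum σ u *ᵥ x) = σ i * α ^ 2 + σ j * γ ^ 2 := by
    rw [dotProduct_spectralSum_mulVec_self]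
    simp [hcoord, add_sq, mul_add, sum_add_distrib, ite_pow, mul_ite, ite_mul, hij.symm]
  have := hM x (by simpa [x, dotProduct_add] using hw)
  rw [hquad, hnorm] at this
  nlinarith [sq_nonneg α]

end Orthonormal

section Parseval

variable {n : Type*} [Fintype n] [DecidableEq n] {u : n → n → ℝ}
  (horth : ∀ i j, u i ⬝ᵥ u j = if i = j then (1 : ℝ) else 0)
include horth

theorem sum_sq_dotProduct_of_orthonormal (x : n → ℝ) : ∑ i, (u i ⬝ᵥ x) ^ 2 = x ⬝ᵥ x := by
  have hrows : of u * (of u)ᵀ = 1 := by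
    ext i j
    simpa [mul_apply, dotProduct, one_apply] using horth i j
  have hcols : (of u)ᵀ * of u = 1 := mul_eq_one_comm.mp hrows
  calc ∑ i, (u i ⬝ᵥ x) ^ 2 = (of u *ᵥ x) ⬝ᵥ (of u *ᵥ x) := by simp [dotProduct, sq]; rfl
    _ = x ⬝ᵥ x := by
      rw [dotProduct_mulVec, ← mulVec_transpose, mulVec_mulVec, hcols, one_mulVec,
        dotProduct_comm]

theorem mul_dotProduct_self_le_sum (τ : n → ℝ) {m : ℝ} (hm : ∀ i, m ≤ τ i) (x : n → ℝ) :
    m * (x ⬝ᵥ x) ≤ ∑ i, τ i * (u i ⬝ᵥ x) ^ 2 := by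
  rw [← sum_sq_dotProduct_of_orthonormal horth, mul_sum]
  exact sum_le_sum fun i _ => mul_le_mul_of_nonneg_right (hm i) (sq_nonneg _)

theorem sum_le_mul_dotProduct_self (τ : n → ℝ) {M : ℝ} (x : n → ℝ)
    (hM : ∀ i, u i ⬝ᵥ x ≠ 0 → τ i ≤ M) :
    ∑ i, τ i * (u i ⬝ᵥ x) ^ 2 ≤ M * (x ⬝ᵥ x) := by
  rw [← sum_sq_dotProduct_of_orthonormal horth, mul_sum]
  refine sum_le_sum fun i _ => ?_
  by_cases h : u i ⬝ᵥ x = 0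
  · simp [h]
  · exact mul_le_mul_of_nonneg_right (hM i h) (sq_nonneg _)

end Parseval

theorem sum_ite_mul_sq_le_sub_mul_sq {ι : Type*} [Fintype ι] [DecidableEq ι] (S : Finset ι)
    {σ a b : ι → ℝ} {β : ℝ} (hσ : ∀ i ∈ S, 0 ≤ σ i) (hb : ∀ i ∉ S, b i = 0) (hβ : 0 ≤ β)
    (hnorm : ∑ i, σ i * b i ^ 2 ≤ 1) :
    ∑ i, (if i ∈ S then (1 - β) * σ i else σ i) * a i ^ 2
      ≤ ∑ i, σ i * a i ^ 2 - β * (∑ i, σ i * b i * a i) ^ 2 := by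
  have hS : ∀ f : ι → ℝ, (∀ i ∉ S, f i = 0) → ∑ i, f i = ∑ i ∈ S, f i := fun f hf =>
    (sum_subset (subset_univ S) fun i _ hi => hf i hi).symm
  have hcs : (∑ i, σ i * b i * a i) ^ 2 ≤ ∑ i ∈ S, σ i * a i ^ 2 := by
    rw [hS _ fun i hi => by simp [hb i hi]]
    calc (∑ i ∈ S, σ i * b i * a i) ^ 2
        ≤ (∑ i ∈ S, σ i * b i ^ 2) * ∑ i ∈ S, σ i * a i ^ 2 :=
          sum_sq_le_sum_mul_sum_of_sq_le_mul S (fun i hi => by have := hσ i hi; positivity)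
            (fun i hi => by have := hσ i hi; positivity) fun i _ => le_of_eq (by ring)
      _ ≤ 1 * ∑ i ∈ S, σ i * a i ^ 2 := by
          rw [← hS _ fun i hi => by simp [hb i hi]]
          exact mul_le_mul_of_nonneg_right hnorm
            (sum_nonneg fun i hi => by have := hσ i hi; positivity)
      _ = _ := one_mul _
  have hsplit : ∑ i, (if i ∈ S then (1 - β) * σ i else σ i) * a i ^ 2
      = ∑ i, σ i * a i ^ 2 - β * ∑ i ∈ S, σ i * a i ^ 2 := by
    rw [mul_sum, ← Fintype.sum_ite_mem S, ← sum_sub_distrib]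
    refine sum_congr rfl fun i _ => ?_
    split_ifs <;> ring
  rw [hsplit]
  nlinarith [mul_le_mul_of_nonneg_left hcs hβ]

section CutUpdate

variable {n R : Type*} [Fintype n] [CommRing R]

def cutUpdate (c β : R) (P : Matrix n n R) (v : n → R) : Matrix n n R :=
  c • (P - β • (P * vecMulVec v v * P))

theorem dotProduct_cutUpdate_mulVec {P : Matrix n n R} (hP : Pᵀ = P) (c β : R) (v x : n → R) :
    x ⬝ᵥ (cutUpdate c β P v *ᵥ x) = c * (x ⬝ᵥ (P *ᵥ x) - β * (v ⬝ᵥ (P *ᵥ x)) ^ 2) := by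
  have hrank : (P * vecMulVec v v * P) *ᵥ x = (v ⬝ᵥ (P *ᵥ x)) • (P *ᵥ v) := by
    rw [← mulVec_mulVec, ← mulVec_mulVec, vecMulVec_mulVec, mulVec_smul, op_smul_eq_smul]
  have hsymm : x ⬝ᵥ (P *ᵥ v) = v ⬝ᵥ (P *ᵥ x) := by
    rw [dotProduct_mulVec, ← mulVec_transpose, hP, dotProduct_comm]
  rw [cutUpdate, smul_mulVec, sub_mulVec, smul_mulVec, hrank, dotProduct_smul, dotProduct_sub,
    dotProduct_smul, dotProduct_smul, hsymm]
  simp only [smul_eq_mul]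
  ring

end CutUpdate

-- Only `≤ 1`: when `gᵀAg ≤ 0` the junk value `(√(gᵀAg))⁻¹ = 0` makes the left side `0`.
theorem dotProduct_mulVec_inv_sqrt_smul_le_one {n : Type*} [Fintype n] (A : Matrix n n ℝ)
    (g : n → ℝ) :
    ((√(g ⬝ᵥ (A *ᵥ g)))⁻¹ • g) ⬝ᵥ (A *ᵥ ((√(g ⬝ᵥ (A *ᵥ g)))⁻¹ • g)) ≤ 1 := by
  simp only [mulVec_smul, dotProduct_smul, smul_dotProduct, smul_eq_mul, ← mul_assoc,
    ← sq, inv_pow]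
  rcases le_or_gt (g ⬝ᵥ (A *ᵥ g)) 0 with h | h
  · simp [Real.sqrt_eq_zero'.mpr h]
  · rw [Real.sq_sqrt h.le, inv_mul_cancel₀ h.ne']

section CentralCut

variable {n : Type*} [Fintype n] [DecidableEq n] {σ σ' : n → ℝ} {u u' : n → n → ℝ}
  {c β : ℝ} {v : n → ℝ}
  (horth : ∀ i j, u i ⬝ᵥ u j = if i = j then (1 : ℝ) else 0)
  (horth' : ∀ i j, u' i ⬝ᵥ u' j = if i = j then (1 : ℝ) else 0)
  (hcut : cutUpdate c β (spectralSum σ u) v = spectralSum σ' u') (hc : 0 ≤ c) (hβ : 0 ≤ β)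
include horth horth' hcut hc hβ

theorem mul_le_of_cutUpdate_eq_spectralSum (S : Finset n) (hσ : ∀ i ∈ S, 0 ≤ σ i)
    (hsupp : ∀ i ∉ S, u i ⬝ᵥ v = 0) (hnorm : v ⬝ᵥ (spectralSum σ u *ᵥ v) ≤ 1) {m : ℝ}
    (hin : ∀ i ∈ S, m ≤ (1 - β) * σ i) (hout : ∀ i ∉ S, m ≤ σ i) (j : n) : c * m ≤ σ' j := by
  refine le_of_forall_mul_le_dotProduct_spectralSum_mulVec horth' (fun x => ?_) j
  rw [← hcut, dotProduct_cutUpdate_mulVec (transpose_spectralSum σ u), mul_assoc]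
  refine mul_le_mul_of_nonneg_left ?_ hc
  rw [dotProduct_spectralSum_mulVec_self] at hnorm
  calc m * (x ⬝ᵥ x) ≤ ∑ i, (if i ∈ S then (1 - β) * σ i else σ i) * (u i ⬝ᵥ x) ^ 2 :=
        mul_dotProduct_self_le_sum horth _
          (fun i => by split_ifs with h; exacts [hin i h, hout i h]) x
    _ ≤ _ := by
        rw [dotProduct_spectralSum_mulVec_self, dotProduct_spectralSum_mulVec]
        exact sum_ite_mul_sq_le_sub_mul_sq S hσ hsupp hβ hnorm

theorem le_mul_of_cutUpdate_eq_spectralSum {i j k : n} (hij : i ≠ j) (hσ' : σ' j ≤ σ' i)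
    {M : ℝ} (hM : ∀ l ≠ k, σ l ≤ M) : σ' j ≤ c * M := by
  refine le_of_forall_dotProduct_eq_zero horth' hij hσ' (u k) fun x hx => ?_
  rw [← hcut, dotProduct_cutUpdate_mulVec (transpose_spectralSum σ u), mul_assoc]
  refine mul_le_mul_of_nonneg_left ?_ hc
  have hPx : x ⬝ᵥ (spectralSum σ u *ᵥ x) ≤ M * (x ⬝ᵥ x) := by
    rw [dotProduct_spectralSum_mulVec_self]
    exact sum_le_mul_dotProduct_self horth σ x fun l hl => hM l (by rintro rfl; exact hl hx)
  nlinarith [mul_nonneg hβ (sq_nonneg (v ⬝ᵥ (spectralSum σ u *ᵥ x)))]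

end CentralCut

theorem div_le_div_of_le_mul_of_mul_le {a b a' b' c : ℝ} (hc : 0 < c) (ha : 0 ≤ a) (hb : 0 < b)
    (ha' : a' ≤ c * a) (hb' : c * b ≤ b') : a' / b' ≤ a / b :=
  calc a' / b' ≤ (c * a) / (c * b) := div_le_div₀ (by positivity) ha' (by positivity) hb'
    _ = a / b := mul_div_mul_left _ _ hc.ne'

/-- Evolution of the eigenvalue ratio `D = σ₂/σ_d` under the central-cut
ellipsoid update. `σ'` denotes the ordered (decreasing) eigenvalues of `P'`. -/
theorem stmt5 (d : ℕ) (hd : 2 ≤ d)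
    (P : Matrix (Fin d) (Fin d) ℝ)
    (σ : Fin d → ℝ) (u : Fin d → Fin d → ℝ)
    (horth : ∀ i j, u i ⬝ᵥ u j = if i = j then (1 : ℝ) else 0)
    (hdecr : ∀ i j : Fin d, i ≤ j → σ j ≤ σ i)
    (hpos : ∀ i, 0 < σ i)
    (hP : P = ∑ i, σ i • vecMulVec (u i) (u i))
    (g : Fin d → ℝ)
    (hspan : ∃ a b : ℝ, g = a • u ⟨0, by omega⟩ + b • u ⟨1, by omega⟩)
    (gt : Fin d → ℝ) (hgt : gt = (Real.sqrt (g ⬝ᵥ (P *ᵥ g)))⁻¹ • g)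
    (P' : Matrix (Fin d) (Fin d) ℝ)
    (hP' : P' = ((d : ℝ)^2 / ((d : ℝ)^2 - 1)) •
      (P - (2 / ((d : ℝ) + 1)) • (P * vecMulVec gt gt * P)))
    (σ' : Fin d → ℝ) (u' : Fin d → Fin d → ℝ)
    (horth' : ∀ i j, u' i ⬝ᵥ u' j = if i = j then (1 : ℝ) else 0)
    (hdecr' : ∀ i j : Fin d, i ≤ j → σ' j ≤ σ' i)
    (hP'decomp : P' = ∑ i, σ' i • vecMulVec (u' i) (u' i)) :
    σ' ⟨1, by omega⟩ / σ' ⟨d - 1, by omega⟩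
      ≤ (((d : ℝ) + 1) / ((d : ℝ) - 1)) * (σ ⟨1, by omega⟩ / σ ⟨d - 1, by omega⟩) ∧
    (σ ⟨1, by omega⟩ / σ ⟨d - 1, by omega⟩ > ((d : ℝ) + 1) / ((d : ℝ) - 1) →
      σ' ⟨1, by omega⟩ / σ' ⟨d - 1, by omega⟩ ≤ σ ⟨1, by omega⟩ / σ ⟨d - 1, by omega⟩) := by
  replace hP : P = spectralSum σ u := hP
  set i0 : Fin d := ⟨0, by omega⟩
  set i1 : Fin d := ⟨1, by omega⟩
  set il : Fin d := ⟨d - 1, by omega⟩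
  set β : ℝ := 2 / ((d : ℝ) + 1)
  have hdR : (2 : ℝ) ≤ d := by exact_mod_cast hd
  have hc : 0 < (d : ℝ) ^ 2 / ((d : ℝ) ^ 2 - 1) := div_pos (by positivity) (by nlinarith)
  have hβ : 0 ≤ β := by positivity
  have h1β : 1 - β = ((d : ℝ) - 1) / ((d : ℝ) + 1) := by
    simp only [β]; field_simp; ring
  have h1βpos : 0 < 1 - β := by rw [h1β]; exact div_pos (by linarith) (by linarith)
  have hσl : ∀ i, σ il ≤ σ i := fun i => hdecr _ _ (by simp only [il, Fin.le_def]; omega)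
  have hcut : cutUpdate _ β (spectralSum σ u) gt = spectralSum σ' u' := hP ▸ hP' ▸ hP'decomp
  have hsupp : ∀ i ∉ Iic i1, u i ⬝ᵥ gt = 0 := by
    obtain ⟨a, b, rfl⟩ := hspan
    intro i hi
    have h0 : i ≠ i0 := by rintro rfl; simp [i0, i1, Fin.le_def] at hi
    have h1 : i ≠ i1 := by rintro rfl; simp at hi
    simp [hgt, dotProduct_add, horth, h0, h1]
  have hnorm : gt ⬝ᵥ (spectralSum σ u *ᵥ gt) ≤ 1 :=
    hP ▸ hgt ▸ dotProduct_mulVec_inv_sqrt_smul_le_one P g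
  have hlow {m : ℝ} (hin : ∀ i ∈ Iic i1, m ≤ (1 - β) * σ i) (hout : ∀ i ∉ Iic i1, m ≤ σ i) :
      _ * m ≤ σ' il :=
    mul_le_of_cutUpdate_eq_spectralSum horth horth' hcut hc.le hβ _
      (fun i _ => (hpos i).le) hsupp hnorm hin hout il
  have hup : σ' i1 ≤ _ * σ i1 :=
    le_mul_of_cutUpdate_eq_spectralSum horth horth' hcut hc.le hβ (i := i0) (k := i0)
      (by simp [i0, i1, Fin.ext_iff]) (hdecr' _ _ (by simp [i0, i1, Fin.le_def])) fun l hl =>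
        hdecr _ _ (by simpa [i0, i1, Fin.ext_iff, Fin.le_def, Nat.one_le_iff_ne_zero] using hl)
  refine ⟨?_, fun hD => ?_⟩
  · calc σ' i1 / σ' il ≤ σ i1 / ((1 - β) * σ il) :=
          div_le_div_of_le_mul_of_mul_le hc (hpos i1).le (mul_pos h1βpos (hpos il)) hup
            (hlow (fun i _ => mul_le_mul_of_nonneg_left (hσl i) h1βpos.le)
              fun i _ => by nlinarith [hσl i, mul_nonneg hβ (hpos il).le])
      _ = _ := by rw [h1β]; field_simp
  · have hl : σ il ≤ (1 - β) * σ i1 := by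
      rw [gt_iff_lt, div_lt_div_iff₀ (by linarith) (hpos il)] at hD
      rw [h1β, div_mul_eq_mul_div, le_div_iff₀ (by linarith)]
      nlinarith
    exact div_le_div_of_le_mul_of_mul_le hc (hpos i1).le (hpos il) hup
      (hlow (fun i hi => hl.trans (mul_le_mul_of_nonneg_left (hdecr _ _ (mem_Iic.mp hi))
        h1βpos.le)) fun i _ => hσl i)
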